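/- Given any strictly increasing sequence (q_i)_{i≥1} of naturals, there exists X = {w_1, w_2, …} ∈ E_k (the range on ω^{[k]} of an E_k-tree, listed in ≺-increasing order) such that for every i ≥ 1, max(w_i) = q_i and every entry of w_i belongs to {q_1, q_2, …}. -/

import Mathlib

/-!
Let `ι s` be the index `i` with `u i` equal to `s` padded to length `k` by repeating its last
entry, and let `X̂ s` be the sequence of labels `q (ι s')` of the nonempty initial segments `s'`
of `s`. Then `X̂ (u i)` ends in `q i`. Padding preserves `≺`, except that it may identify a proper
initial segment `s` of `t` with the same last entry; but then `X̂ s` is a proper initial segment of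
`X̂ t` with the same last entry, so `X̂ s ≺ X̂ t` still holds. Consecutive nonempty initial
segments of a nondecreasing sequence are `≺`-increasing, so `X̂ s` is nondecreasing.
-/

/-- Non-decreasing list of naturals. -/
abbrev NonDec (l : List ℕ) : Prop := l.Chain' (· ≤ ·)

/-- The order `≺` on nondecreasing sequences: the empty sequence is minimal;
nonempty sequences are compared by last entry, with lexicographic tie-breaking. -/
def prec (s t : List ℕ) : Prop :=
  (s = [] ∧ t ≠ []) ∨
  (s ≠ [] ∧ t ≠ [] ∧ (s.getLast! < t.getLast! ∨
    (s.getLast! = t.getLast! ∧ List.Lex (· < ·) s t)))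

/-- The map `X̂_v`: `(m_1,…,m_l) ↦ (f_1(m_1),…,f_l(m_l))` where
`f_j(0) = n_j` and `f_j(m) = n_k + m` for `m ≥ 1`, `v = (n_1,…,n_k)`. -/
def Xhat (v s : List ℕ) : List ℕ :=
  List.zipWith (fun a b => if b = 0 then a else v.getLast! + b) (v.take s.length) s

/-- The set `X_v^max`, described by its characterization:
`w ∈ X_v^max` iff `w` is nondecreasing of the same length as `v` and either
`w_1 > n_k`, or there is `1 ≤ i ≤ k` with `(w_1,…,w_i) = (n_1,…,n_i)` and
(if `i < k`) `w_{i+1} > n_k`. -/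
def XmaxSet (v : List ℕ) : Set (List ℕ) :=
  { w | w.length = v.length ∧ NonDec w ∧
    (v.getLast! < w.headI ∨
      ∃ i, 1 ≤ i ∧ i ≤ v.length ∧ w.take i = v.take i ∧
        (i < v.length → v.getLast! < w.getD i 0)) }

/-- An `E_k`-tree: a map on `ω^{≤k}` sending nondecreasing sequences of length `≤ k`
to nondecreasing sequences of the same length, preserving `≺` and initial segments. -/
def IsEkTree (k : ℕ) (X : List ℕ → List ℕ) : Prop :=
  (∀ s, NonDec s → s.length ≤ k → NonDec (X s) ∧ (X s).length = s.length) ∧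
  (∀ s t, NonDec s → NonDec t → s.length ≤ k → t.length ≤ k →
    (prec s t → prec (X s) (X t)) ∧ (s <+: t → X s <+: X t))

/-- `E ∈ AR^k`: `E` is a finite `≺`-initial segment of the restriction to `ω^{[k]}`
of some `E_k`-tree. -/
def memAR (k : ℕ) (E : Finset (List ℕ)) : Prop :=
  ∃ X : List ℕ → List ℕ, IsEkTree k X ∧
    (∀ e ∈ E, ∃ s, NonDec s ∧ s.length = k ∧ e = X s) ∧
    (∀ s, NonDec s → s.length = k → ∀ e ∈ E, prec (X s) e → X s ∈ E)


open List

theorem prec_asymm {s t : List ℕ} (h : prec s t) : ¬ prec t s := by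
  rintro (⟨rfl, -⟩ | ⟨-, hs, g⟩)
  · rcases h with ⟨-, h⟩ | ⟨-, h, -⟩ <;> exact h rfl
  · rcases h with ⟨rfl, -⟩ | ⟨-, -, h | ⟨h, h'⟩⟩
    · exact hs rfl
    · rcases g with g | ⟨g, -⟩ <;> omega
    · rcases g with g | ⟨-, g'⟩
      · omega
      · exact List.lt_asymm h' g'

instance : Std.Asymm prec := ⟨fun _ _ => prec_asymm⟩

theorem ne_nil_of_prec {s t : List ℕ} (h : prec s t) : t ≠ [] := by
  rcases h with ⟨-, h⟩ | ⟨-, h, -⟩ <;> exact h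

section Enumeration

variable {α : Type*} {r : α → α → Prop} [Std.Asymm r] {u : ℕ → α}

theorem lt_of_rel_of_forall_lt_imp_rel (hu : ∀ i j, i < j → r (u i) (u j)) {i j : ℕ}
    (h : r (u i) (u j)) : i < j := by
  by_contra! hji
  rcases hji.lt_or_eq with hlt | rfl
  · exact Std.Asymm.asymm _ _ h (hu _ _ hlt)
  · exact Std.Asymm.asymm _ _ h h

theorem injective_of_forall_lt_imp_rel (hu : ∀ i j, i < j → r (u i) (u j)) :
    Function.Injective u :=
  Function.Injective.of_lt_imp_ne fun i j hij heq =>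
    Std.Asymm.asymm _ _ (hu i j hij) (heq ▸ hu i j hij)

end Enumeration

theorem List.Lex.append_of_not_isPrefix {α : Type*} {r : α → α → Prop} {s t : List α}
    (h : Lex r s t) (hst : ¬ s <+: t) (a b : List α) : Lex r (s ++ a) (t ++ b) := by
  induction h with
  | nil => exact absurd nil_prefix hst
  | cons _ ih => exact .cons (ih fun hp => hst (cons_prefix_cons.mpr ⟨rfl, hp⟩))
  | rel h => exact .rel h

theorem List.getLast!_eq_getLast {α : Type*} [Inhabited α] {l : List α} (h : l ≠ []) :
    l.getLast! = l.getLast h := by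
  simp [getLast?_eq_some_getLast h]

theorem NonDec.le_getLast! {l : List ℕ} (h : NonDec l) {x : ℕ} (hx : x ∈ l) :
    x ≤ l.getLast! := by
  rw [getLast!_eq_getLast (ne_nil_of_mem hx)]
  exact (isChain_iff_pairwise.mp h).rel_getLast_of_rel_getLast_getLast hx le_rfl

theorem prec_of_isPrefix {s t : List ℕ} (ht : NonDec t) (hs : s ≠ []) (hst : s <+: t)
    (hne : s ≠ t) : prec s t := by
  have hlast : s.getLast! ≤ t.getLast! := by
    rw [getLast!_eq_getLast hs]
    exact ht.le_getLast! (hst.subset (getLast_mem hs))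
  refine .inr ⟨hs, fun ht0 => hs (prefix_nil.mp (ht0 ▸ hst)), ?_⟩
  rcases hlast.lt_or_eq with hlt | heq
  · exact .inl hlt
  · exact .inr ⟨heq, (List.le_iff_lt_or_eq.mp hst.le).resolve_right hne⟩

def padLast (k : ℕ) (s : List ℕ) : List ℕ := s ++ replicate (k - s.length) s.getLast!

section padLast

variable {k : ℕ} {s t : List ℕ}

theorem length_padLast (h : s.length ≤ k) : (padLast k s).length = k := by
  simp [padLast]; omega

theorem padLast_of_length_eq (h : s.length = k) : padLast k s = s := by
  simp [padLast, h]

theorem getLast!_padLast : (padLast k s).getLast! = s.getLast! := by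
  by_cases h : k - s.length = 0 <;> simp [padLast, getLast?_replicate, h]

theorem nonDec_padLast (h : NonDec s) : NonDec (padLast k s) := by
  refine isChain_iff_pairwise.mpr ?_
  rw [padLast, pairwise_append, pairwise_replicate]
  exact ⟨isChain_iff_pairwise.mp h, .inr le_rfl,
    fun x hx y hy => (eq_of_mem_replicate hy).symm ▸ h.le_getLast! hx⟩

theorem padLast_eq_of_isPrefix (ht : NonDec t) (htk : t.length ≤ k) (hs : s ≠ [])
    (hst : s <+: t) (hlast : s.getLast! = t.getLast!) : padLast k s = padLast k t := by
  obtain ⟨r, rfl⟩ := hst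
  have hr : ∀ x ∈ r, x = s.getLast! := fun x hx => le_antisymm
    (hlast ▸ ht.le_getLast! (mem_append_right s hx))
    ((pairwise_append.mp (isChain_iff_pairwise.mp ht)).2.2 _
      (getLast!_eq_getLast hs ▸ getLast_mem hs) x hx)
  rw [eq_replicate_of_mem hr] at hlast htk ⊢
  rw [padLast, padLast, ← hlast, append_assoc, ← replicate_add, length_append, length_replicate]
  congr 2
  simp only [length_append, length_replicate] at htk
  omega

theorem prec_padLast_or_eq (hk : 0 < k) (ht : NonDec t) (hs : s ≠ []) (hsk : s.length ≤ k)
    (htk : t.length ≤ k) (h : prec s t) :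
    prec (padLast k s) (padLast k t) ∨ s <+: t ∧ padLast k s = padLast k t := by
  have hs' : padLast k s ≠ [] := ne_nil_of_length_pos (by rw [length_padLast hsk]; exact hk)
  have ht' : padLast k t ≠ [] := ne_nil_of_length_pos (by rw [length_padLast htk]; exact hk)
  rcases h with ⟨rfl, -⟩ | ⟨-, -, hlt | ⟨heq, hlex⟩⟩
  · exact absurd rfl hs
  · exact .inl (.inr ⟨hs', ht', .inl (by simpa only [getLast!_padLast] using hlt)⟩)
  · by_cases hst : s <+: t
    · exact .inr ⟨hst, padLast_eq_of_isPrefix ht htk hs hst heq⟩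
    · refine .inl (.inr ⟨hs', ht', .inr ⟨?_, hlex.append_of_not_isPrefix hst _ _⟩⟩)
      simpa only [getLast!_padLast] using heq

end padLast

def mapPrefixes (f : List ℕ → ℕ) (s : List ℕ) : List ℕ :=
  (range s.length).map fun j => f (s.take (j + 1))

section mapPrefixes

variable {f : List ℕ → ℕ} {s t : List ℕ}

@[simp]
theorem length_mapPrefixes : (mapPrefixes f s).length = s.length := by
  simp [mapPrefixes]

theorem mapPrefixes_eq_nil_iff : mapPrefixes f s = [] ↔ s = [] := by
  rw [← length_eq_zero_iff, length_mapPrefixes, length_eq_zero_iff]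

theorem getLast!_mapPrefixes (hs : s ≠ []) : (mapPrefixes f s).getLast! = f s := by
  have hpos : 0 < s.length := length_pos_iff.mpr hs
  simp [mapPrefixes, getLast?_eq_getElem?, getElem?_range (Nat.sub_one_lt_of_lt hpos),
    Nat.sub_add_cancel hpos]

theorem List.IsPrefix.mapPrefixes (h : s <+: t) : mapPrefixes f s <+: mapPrefixes f t := by
  obtain ⟨r, rfl⟩ := h
  have : mapPrefixes f s = (range s.length).map fun j => f ((s ++ r).take (j + 1)) :=
    map_congr_left fun j hj => by
      rw [take_append_of_le_length (by simpa [Nat.succ_le_iff] using hj)]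
  rw [this, mapPrefixes, length_append, range_add]
  exact prefix_append _ _ |>.map _

end mapPrefixes

def IsPrecLabelling (k : ℕ) (f : List ℕ → ℕ) : Prop :=
  ∀ ⦃s t : List ℕ⦄, NonDec s → NonDec t → s.length ≤ k → t.length ≤ k → s ≠ [] → prec s t →
    f s < f t ∨ s <+: t ∧ f s = f t

section IsPrecLabelling

variable {k : ℕ} {f : List ℕ → ℕ} {s t : List ℕ}

theorem IsPrecLabelling.nonDec_mapPrefixes (hf : IsPrecLabelling k f) (hs : NonDec s)
    (hsk : s.length ≤ k) : NonDec (mapPrefixes f s) := by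
  refine (isChain_map _).mpr ((isChain_range _ _).mpr fun m hm => ?_)
  have hlen : ∀ n, (s.take n).length = min n s.length := fun n => length_take
  have hne : s.take (m + 1) ≠ s.take (m + 1 + 1) := fun h => by
    have := congrArg length h
    simp only [hlen] at this
    omega
  have hne0 : s.take (m + 1) ≠ [] := ne_nil_of_length_pos (by rw [hlen]; omega)
  have hprec := prec_of_isPrefix (hs.take _) hne0 (take_prefix_take_left (by omega)) hne
  rcases hf (hs.take _) (hs.take _) (by rw [hlen]; omega) (by rw [hlen]; omega) hne0 hprec with
    h | ⟨-, h⟩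
  exacts [h.le, h.le]

theorem IsPrecLabelling.prec_mapPrefixes (hf : IsPrecLabelling k f) (hs : NonDec s)
    (ht : NonDec t) (hsk : s.length ≤ k) (htk : t.length ≤ k) (h : prec s t) :
    prec (mapPrefixes f s) (mapPrefixes f t) := by
  have ht0 : t ≠ [] := ne_nil_of_prec h
  rcases eq_or_ne s [] with rfl | hs0
  · exact .inl ⟨rfl, mapPrefixes_eq_nil_iff.not.mpr ht0⟩
  refine .inr ⟨mapPrefixes_eq_nil_iff.not.mpr hs0, mapPrefixes_eq_nil_iff.not.mpr ht0, ?_⟩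
  rw [getLast!_mapPrefixes hs0, getLast!_mapPrefixes ht0]
  rcases hf hs ht hsk htk hs0 h with hlt | ⟨hst, heq⟩
  · exact .inl hlt
  refine .inr ⟨heq, (List.le_iff_lt_or_eq.mp hst.mapPrefixes.le).resolve_right fun he => ?_⟩
  have hlen := congrArg length he
  rw [length_mapPrefixes, length_mapPrefixes] at hlen
  exact Std.Asymm.asymm _ _ h (hst.eq_of_length hlen ▸ h)

theorem IsPrecLabelling.isEkTree_mapPrefixes (hf : IsPrecLabelling k f) :
    IsEkTree k (mapPrefixes f) :=
  ⟨fun _ hs hsk => ⟨hf.nonDec_mapPrefixes hs hsk, length_mapPrefixes⟩,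
    fun _ _ hs ht hsk htk => ⟨hf.prec_mapPrefixes hs ht hsk htk, IsPrefix.mapPrefixes⟩⟩

theorem isPrecLabelling_padLast {q : ℕ → ℕ} {κ : List ℕ → ℕ} (hk : 0 < k) (hq : StrictMono q)
    (hκ : ∀ ⦃a b : List ℕ⦄, NonDec a → NonDec b → a.length = k → b.length = k → prec a b →
      κ a < κ b) :
    IsPrecLabelling k fun s => q (κ (padLast k s)) := by
  intro s t hs ht hsk htk hs0 h
  rcases prec_padLast_or_eq hk ht hs0 hsk htk h with h' | ⟨hst, heq⟩
  · exact .inl (hq (hκ (nonDec_padLast hs) (nonDec_padLast ht) (length_padLast hsk)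
      (length_padLast htk) h'))
  · exact .inr ⟨hst, congrArg (q ∘ κ) heq⟩

end IsPrecLabelling

/-- given a strictly increasing sequence `(q_i)` of naturals, there is
an `E_k`-tree `X̂` such that, enumerating `ω^{[k]}` in `≺`-increasing order as
`(u_i)`, the element `w_i = X̂(u_i)` has maximum `q_i` and all its entries among
the `q_j`'s. -/
theorem exists_EkTree_prescribed_maxima (k : ℕ) (hk : 2 ≤ k)
    (q : ℕ → ℕ) (hq : StrictMono q)
    (u : ℕ → List ℕ)
    (hu1 : ∀ i, NonDec (u i) ∧ (u i).length = k)
    (hu2 : ∀ i j, i < j → prec (u i) (u j))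
    (hu3 : ∀ s, NonDec s → s.length = k → ∃ i, u i = s) :
    ∃ X : List ℕ → List ℕ, IsEkTree k X ∧
      ∀ i, (X (u i)).getLast! = q i ∧ ∀ a ∈ X (u i), ∃ j, a = q j := by
  have hinv : ∀ i, Function.invFun u (u i) = i :=
    Function.leftInverse_invFun (injective_of_forall_lt_imp_rel hu2)
  have hmono : ∀ ⦃a b : List ℕ⦄, NonDec a → NonDec b → a.length = k → b.length = k →
      prec a b → Function.invFun u a < Function.invFun u b := by
    intro a b ha hb hak hbk h
    obtain ⟨i, rfl⟩ := hu3 a ha hak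
    obtain ⟨j, rfl⟩ := hu3 b hb hbk
    rw [hinv, hinv]
    exact lt_of_rel_of_forall_lt_imp_rel hu2 h
  refine ⟨_, (isPrecLabelling_padLast (by omega) hq hmono).isEkTree_mapPrefixes, fun i => ⟨?_, ?_⟩⟩
  · have hui : u i ≠ [] := ne_nil_of_length_pos (by rw [(hu1 i).2]; omega)
    rw [getLast!_mapPrefixes hui, padLast_of_length_eq (hu1 i).2, hinv]
  · intro a ha
    obtain ⟨j, -, rfl⟩ := mem_map.mp ha
    exact ⟨_, rfl⟩
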